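/- arXiv:2604.25763 — 2 statements merged into one kernel-verified Lean document; each statement's English description precedes it below -/
import Mathlib

section
/- Suppose for each k ∈ ℕ the family V^k_x of Hadamard coefficients satisfies the transport equations (ρ_x - 2k)V^k_x = 2k·P·V^{k-1}_x (with right side 0 when k = 0) and V^0_x(x) = 1. For z ∈ ℂ define V_k(z) := Σ_{m=0}^k binom(k,m) z^m V^{k-m}_x. Then V_0(z)(x) = 1 and the V_k(z) satisfy the transport equations for the operator P - z: (ρ_x - 2k)V_k(z) = 2k(P - z)V_{k-1}(z) for all k ≥ 1. -/
/-- Hadamard coefficients of `P - z`: if `(V^k)` satisfy the transport equations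
`(ρ - 2k)V^k = 2k P V^{k-1}` (with `ρ V^0 = 0`), then
`V_k(z) := Σ_{m=0}^k C(k,m) z^m V^{k-m}` satisfies `V_0(z) = V^0` and the transport
equations `(ρ - 2k) V_k(z) = 2k (P - z) V_{k-1}(z)` for the operator `P - z`. -/
theorem stmt4 (A : Type*) [AddCommGroup A] [Module ℂ A]
    (ρ P : A →ₗ[ℂ] A) (V : ℕ → A)
    (htrans : ∀ k : ℕ, 1 ≤ k →
      ρ (V k) - ((2 * k : ℕ) : ℂ) • V k = ((2 * k : ℕ) : ℂ) • P (V (k - 1)))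
    (h0 : ρ (V 0) = 0) (z : ℂ) :
    (∑ m ∈ Finset.range 1, ((Nat.choose 0 m : ℂ) * z ^ m) • V (0 - m)) = V 0 ∧
    ∀ k : ℕ, 1 ≤ k →
      ρ (∑ m ∈ Finset.range (k + 1), ((k.choose m : ℂ) * z ^ m) • V (k - m))
          - ((2 * k : ℕ) : ℂ) •
              (∑ m ∈ Finset.range (k + 1), ((k.choose m : ℂ) * z ^ m) • V (k - m))
        = ((2 * k : ℕ) : ℂ) •
            (P (∑ m ∈ Finset.range k, (((k - 1).choose m : ℂ) * z ^ m) • V (k - 1 - m))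
              - z • (∑ m ∈ Finset.range k, (((k - 1).choose m : ℂ) * z ^ m) • V (k - 1 - m))) := by
  refine ⟨by simp, ?_⟩
  intro k hk
  obtain ⟨n, rfl⟩ : ∃ n, k = n + 1 := ⟨k - 1, by omega⟩
  -- expansion of ρ on each V
  have hexp : ∀ m : ℕ, m ≤ n + 1 →
      ρ (V (n + 1 - m)) = ((2 * (n + 1 - m) : ℕ) : ℂ) • V (n + 1 - m)
        + ((2 * (n + 1 - m) : ℕ) : ℂ) • P (V (n - m)) := by
    intro m hm
    rcases eq_or_lt_of_le hm with h | h
    · subst h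
      simp [h0]
    · have h1 : 1 ≤ n + 1 - m := by omega
      have ht := htrans (n + 1 - m) h1
      have hsub : n + 1 - m - 1 = n - m := by omega
      rw [hsub, sub_eq_iff_eq_add] at ht
      rw [ht, add_comm]
  have lhs_eq :
      ρ (∑ m ∈ Finset.range (n + 1 + 1), (((n + 1).choose m : ℂ) * z ^ m) • V (n + 1 - m))
        - ((2 * (n + 1) : ℕ) : ℂ) •
            ∑ m ∈ Finset.range (n + 1 + 1), (((n + 1).choose m : ℂ) * z ^ m) • V (n + 1 - m)
      = ∑ m ∈ Finset.range (n + 2),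
          (((2 * (n + 1 - m) : ℕ) : ℂ) * ((n + 1).choose m : ℂ) * z ^ m) • P (V (n - m))
        - ∑ m ∈ Finset.range (n + 2),
          (((2 * m : ℕ) : ℂ) * ((n + 1).choose m : ℂ) * z ^ m) • V (n + 1 - m) := by
    rw [map_sum, Finset.smul_sum, ← Finset.sum_sub_distrib, ← Finset.sum_sub_distrib]
    refine Finset.sum_congr rfl fun m hm => ?_
    have hm' : m ≤ n + 1 := by
      have := Finset.mem_range.mp hm; omega
    rw [map_smul, hexp m hm']
    have hc : ((2 * (n + 1) : ℕ) : ℂ) = ((2 * (n + 1 - m) : ℕ) : ℂ) + ((2 * m : ℕ) : ℂ) := by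
      have : 2 * (n + 1) = 2 * (n + 1 - m) + 2 * m := by omega
      exact_mod_cast congrArg (Nat.cast : ℕ → ℂ) this
    rw [hc]
    module
  rw [lhs_eq]
  -- first sum: drop vanishing last term and rewrite coefficient
  have hsum1 :
      ∑ m ∈ Finset.range (n + 2),
          (((2 * (n + 1 - m) : ℕ) : ℂ) * ((n + 1).choose m : ℂ) * z ^ m) • P (V (n - m))
      = ∑ m ∈ Finset.range (n + 1),
          (((2 * (n + 1) : ℕ) : ℂ) * ((n.choose m : ℂ) * z ^ m)) • P (V (n - m)) := by
    rw [Finset.sum_range_succ]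
    simp only [Nat.sub_self, Nat.mul_zero, Nat.cast_zero, zero_mul, zero_smul, add_zero]
    refine Finset.sum_congr rfl fun m hm => ?_
    have hm' : m ≤ n := by have := Finset.mem_range.mp hm; omega
    congr 1
    have hnat : 2 * (n + 1 - m) * (n + 1).choose m = 2 * (n + 1) * n.choose m := by
      have h1 : (n + 1).choose m * (n + 1 - m) = (n + 1).choose (m + 1) * (m + 1) := by
        rw [Nat.choose_succ_right_eq]
      have h2 : (n + 1) * n.choose m = (n + 1).choose (m + 1) * (m + 1) := by
        rw [← Nat.add_one_mul_choose_eq]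
      calc 2 * (n + 1 - m) * (n + 1).choose m = 2 * ((n + 1).choose m * (n + 1 - m)) := by ring
        _ = 2 * ((n + 1) * n.choose m) := by rw [h1, ← h2]
        _ = 2 * (n + 1) * n.choose m := by ring
    calc ((2 * (n + 1 - m) : ℕ) : ℂ) * ((n + 1).choose m : ℂ) * z ^ m
        = ((2 * (n + 1 - m) * (n + 1).choose m : ℕ) : ℂ) * z ^ m := by push_cast; ring
      _ = ((2 * (n + 1) * n.choose m : ℕ) : ℂ) * z ^ m := by rw [hnat]
      _ = ((2 * (n + 1) : ℕ) : ℂ) * ((n.choose m : ℂ) * z ^ m) := by push_cast; ring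
  -- second sum: drop vanishing first term, shift index, rewrite coefficient
  have hsum2 :
      ∑ m ∈ Finset.range (n + 2),
          (((2 * m : ℕ) : ℂ) * ((n + 1).choose m : ℂ) * z ^ m) • V (n + 1 - m)
      = ∑ m ∈ Finset.range (n + 1),
          (((2 * (n + 1) : ℕ) : ℂ) * (z * ((n.choose m : ℂ) * z ^ m))) • V (n - m) := by
    rw [Finset.sum_range_succ']
    simp only [Nat.mul_zero, Nat.cast_zero, zero_mul, zero_smul, add_zero]
    refine Finset.sum_congr rfl fun m hm => ?_
    have hm' : m ≤ n := by have := Finset.mem_range.mp hm; omega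
    have hidx : n + 1 - (m + 1) = n - m := by omega
    rw [hidx]
    congr 1
    have hnat : 2 * (m + 1) * (n + 1).choose (m + 1) = 2 * (n + 1) * n.choose m := by
      have h2 : (n + 1) * n.choose m = (n + 1).choose (m + 1) * (m + 1) := by
        rw [← Nat.add_one_mul_choose_eq]
      calc 2 * (m + 1) * (n + 1).choose (m + 1)
          = 2 * ((n + 1).choose (m + 1) * (m + 1)) := by ring
        _ = 2 * ((n + 1) * n.choose m) := by rw [← h2]
        _ = 2 * (n + 1) * n.choose m := by ring
    calc ((2 * (m + 1) : ℕ) : ℂ) * ((n + 1).choose (m + 1) : ℂ) * z ^ (m + 1)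
        = ((2 * (m + 1) * (n + 1).choose (m + 1) : ℕ) : ℂ) * z ^ (m + 1) := by push_cast; ring
      _ = ((2 * (n + 1) * n.choose m : ℕ) : ℂ) * z ^ (m + 1) := by rw [hnat]
      _ = ((2 * (n + 1) : ℕ) : ℂ) * (z * ((n.choose m : ℂ) * z ^ m)) := by push_cast; ring
  rw [hsum1, hsum2]
  rw [smul_sub, map_sum, Finset.smul_sum, Finset.smul_sum, Finset.smul_sum]
  congr 1
  · exact Finset.sum_congr rfl fun m _ => by rw [map_smul, smul_smul]; norm_num
  · exact Finset.sum_congr rfl fun m _ => by rw [smul_smul, smul_smul]; norm_num; congr 1; ring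
end

section
/- Let ν : ℝ → ℝ be smooth with ν(0) = 1, and for ξ > 1 define ν_ξ(t) := ξ²(ν(ξt) - 1) + 1. Call a function 'good of order k' if it has the form t ↦ ξ^k ν_ξ(t)^q h(ξt) for some q ∈ ℝ and smooth h (defined where ν_ξ > 0). Then the derivative of a good summand of order k is a sum of two good summands of order k+1 and k+3 respectively; by induction, the n-th derivative of ν_ξ(t)^p · V(ξt) (for smooth V, p ∈ ℝ) is a finite sum of good summands of order at least n, and its value at t = 0 is a polynomial in ξ with no monomials of degree less than n (for n ≥ 1), while at n = 0 the value at t=0 is V(0). -/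
structure MTerm where
  c : ℝ
  k : ℕ
  q : ℝ
  h : ℝ → ℝ

namespace MTerm

noncomputable def ev (ν : ℝ → ℝ) (ξ : ℝ) (e : MTerm) (t : ℝ) : ℝ :=
  e.c * ξ ^ e.k * (ξ ^ 2 * (ν (ξ * t) - 1) + 1) ^ e.q * e.h (ξ * t)

noncomputable def D (ν : ℝ → ℝ) (e : MTerm) : List MTerm :=
  [⟨e.c * e.q, e.k + 3, e.q - 1, fun s => deriv ν s * e.h s⟩,
   ⟨e.c, e.k + 1, e.q, deriv e.h⟩]

noncomputable def evL (ν : ℝ → ℝ) (ξ : ℝ) (L : List MTerm) (t : ℝ) : ℝ :=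
  (L.map (fun e => e.ev ν ξ t)).sum

noncomputable def Ln (ν : ℝ → ℝ) (p : ℝ) (V : ℝ → ℝ) : ℕ → List MTerm
  | 0 => [⟨1, 0, p, V⟩]
  | n + 1 => (Ln ν p V n).flatMap (D ν)

lemma ev_hasDerivAt (ν : ℝ → ℝ) (hν : ContDiff ℝ (⊤ : ℕ∞) ν) (ξ : ℝ)
    (e : MTerm) (he : ContDiff ℝ (⊤ : ℕ∞) e.h) (t : ℝ)
    (hpos : 0 < ξ ^ 2 * (ν (ξ * t) - 1) + 1) :
    HasDerivAt (e.ev ν ξ) (evL ν ξ (e.D ν) t) t := by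
  have hlin : HasDerivAt (fun u : ℝ => ξ * u) ξ t := by
    simpa using (hasDerivAt_id t).const_mul ξ
  have hνd : HasDerivAt ν (deriv ν (ξ * t)) (ξ * t) :=
    (hν.differentiable (by simp) (ξ * t)).hasDerivAt
  have hg : HasDerivAt (fun u => ξ ^ 2 * (ν (ξ * u) - 1) + 1)
      (ξ ^ 2 * (deriv ν (ξ * t) * ξ)) t := by
    exact ((((hνd.comp t hlin).sub_const 1).const_mul (ξ ^ 2)).add_const 1)
  have hgq := hg.rpow_const (p := e.q) (Or.inl (ne_of_gt hpos))
  have hhd : HasDerivAt e.h (deriv e.h (ξ * t)) (ξ * t) :=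
    (he.differentiable (by simp) (ξ * t)).hasDerivAt
  have hh : HasDerivAt (fun u => e.h (ξ * u)) (deriv e.h (ξ * t) * ξ) t :=
    hhd.comp t hlin
  have := ((hgq.mul hh).const_mul (e.c * ξ ^ e.k))
  have h2 : HasDerivAt (e.ev ν ξ)
      (e.c * ξ ^ e.k *
        (ξ ^ 2 * (deriv ν (ξ * t) * ξ) * e.q * (ξ ^ 2 * (ν (ξ * t) - 1) + 1) ^ (e.q - 1) * e.h (ξ * t)
          + (ξ ^ 2 * (ν (ξ * t) - 1) + 1) ^ e.q * (deriv e.h (ξ * t) * ξ))) t := by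
    refine this.congr_deriv rfl |>.congr_of_eventuallyEq ?_
    · filter_upwards with u
      simp [ev, mul_assoc]
  convert h2 using 1
  simp only [evL, D, ev, List.map_cons, List.map_nil, List.sum_cons, List.sum_nil, add_zero]
  ring

end MTerm

namespace MTerm

lemma evL_hasDerivAt (ν : ℝ → ℝ) (hν : ContDiff ℝ (⊤ : ℕ∞) ν) (ξ : ℝ)
    (L : List MTerm) (hL : ∀ e ∈ L, ContDiff ℝ (⊤ : ℕ∞) e.h) (t : ℝ)
    (hpos : 0 < ξ ^ 2 * (ν (ξ * t) - 1) + 1) :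
    HasDerivAt (evL ν ξ L) (evL ν ξ (L.flatMap (D ν)) t) t := by
  induction L with
  | nil =>
    show HasDerivAt (fun u => evL ν ξ [] u) (evL ν ξ ([].flatMap (D ν)) t) t
    simpa [evL] using hasDerivAt_const t (0 : ℝ)
  | cons e L ih =>
    have h1 := ev_hasDerivAt ν hν ξ e (hL e (by simp)) t hpos
    have h2 := ih (fun e' he' => hL e' (by simp [he']))
    have := h1.add h2
    refine this.congr_deriv ?_ |>.congr_of_eventuallyEq ?_
    · simp [evL, List.flatMap_cons]
    · filter_upwards with u; simp [evL]

lemma Ln_mem (ν : ℝ → ℝ) (hν : ContDiff ℝ (⊤ : ℕ∞) ν) (p : ℝ) (V : ℝ → ℝ)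
    (hV : ContDiff ℝ (⊤ : ℕ∞) V) :
    ∀ n, ∀ e ∈ Ln ν p V n, ContDiff ℝ (⊤ : ℕ∞) e.h ∧ n ≤ e.k := by
  intro n
  induction n with
  | zero => intro e he; simp [Ln] at he; subst he; exact ⟨hV, Nat.zero_le _⟩
  | succ n ih =>
    intro e he
    simp only [Ln, List.mem_flatMap] at he
    obtain ⟨e', he', hmem⟩ := he
    obtain ⟨hsm, hk⟩ := ih e' he'
    have hν' : ContDiff ℝ (⊤ : ℕ∞) (deriv ν) := (contDiff_infty_iff_deriv.mp hν).2
    have hsm' : ContDiff ℝ (⊤ : ℕ∞) (deriv e'.h) := (contDiff_infty_iff_deriv.mp hsm).2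
    simp only [D, List.mem_cons, List.mem_singleton, List.not_mem_nil, or_false] at hmem
    rcases hmem with rfl | rfl
    · exact ⟨hν'.mul hsm, by simp only []; omega⟩
    · exact ⟨hsm', by simp only []; omega⟩

lemma iteratedDeriv_eq_evL (ν : ℝ → ℝ) (hν : ContDiff ℝ (⊤ : ℕ∞) ν) (p : ℝ)
    (V : ℝ → ℝ) (hV : ContDiff ℝ (⊤ : ℕ∞) V) (ξ : ℝ) :
    ∀ n, ∀ t, 0 < ξ ^ 2 * (ν (ξ * t) - 1) + 1 →
      iteratedDeriv n (fun u => (ξ ^ 2 * (ν (ξ * u) - 1) + 1) ^ p * V (ξ * u)) t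
        = evL ν ξ (Ln ν p V n) t := by
  intro n
  induction n with
  | zero =>
    intro t _
    simp [Ln, evL, ev]
  | succ n ih =>
    intro t ht
    have hgcont : Continuous fun u => ξ ^ 2 * (ν (ξ * u) - 1) + 1 := by
      have := hν.continuous; fun_prop
    have hSopen : IsOpen {u : ℝ | 0 < ξ ^ 2 * (ν (ξ * u) - 1) + 1} :=
      isOpen_lt continuous_const hgcont
    have hEq : iteratedDeriv n (fun u => (ξ ^ 2 * (ν (ξ * u) - 1) + 1) ^ p * V (ξ * u))
        =ᶠ[nhds t] evL ν ξ (Ln ν p V n) :=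
      Filter.eventuallyEq_of_mem (hSopen.mem_nhds ht) (fun u hu => ih u hu)
    have hd := evL_hasDerivAt ν hν ξ (Ln ν p V n)
      (fun e he => (Ln_mem ν hν p V hV n e he).1) t ht
    rw [iteratedDeriv_succ, hEq.deriv_eq, hd.deriv]
    rfl

end MTerm

namespace MTerm

noncomputable def toPoly (L : List MTerm) : Polynomial ℝ :=
  (L.map (fun e => Polynomial.C (e.c * e.h 0) * Polynomial.X ^ e.k)).sum

lemma toPoly_coeff (n : ℕ) : ∀ L : List MTerm, (∀ e ∈ L, n ≤ e.k) →
    ∀ j < n, (toPoly L).coeff j = 0 := by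
  intro L
  induction L with
  | nil => intro _ j _; simp [toPoly]
  | cons e L ih =>
    intro hk j hj
    have hek := hk e (by simp)
    simp only [toPoly, List.map_cons, List.sum_cons, Polynomial.coeff_add,
      Polynomial.coeff_C_mul, Polynomial.coeff_X_pow]
    rw [if_neg (by omega)]
    have := ih (fun e' he' => hk e' (by simp [he'])) j hj
    simp only [toPoly] at this
    simpa [Polynomial.C_mul] using this

lemma toPoly_eval (ν : ℝ → ℝ) (hν0 : ν 0 = 1) (ξ : ℝ) :
    ∀ L : List MTerm, (toPoly L).eval ξ = evL ν ξ L 0 := by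
  intro L
  induction L with
  | nil => simp [toPoly, evL]
  | cons e L ih =>
    simp only [toPoly, List.map_cons, List.sum_cons, Polynomial.eval_add,
      Polynomial.eval_mul, Polynomial.eval_C, Polynomial.eval_pow, Polynomial.eval_X,
      evL, List.sum_cons] at *
    rw [ih]
    simp [ev, hν0, evL]
    ring

end MTerm

/-- One-variable model of Lemma `xidiff`: for smooth `ν` with `ν(0) = 1` and
`ν_ξ(t) := ξ²(ν(ξt) - 1) + 1` (ξ > 1):
(a) the value of `ν_ξ^p · V(ξ·)` at `t = 0` is `V(0)`;
(b) the derivative of a good summand `t ↦ ξᵏ ν_ξ(t)^q h(ξt)` of order `k` is the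
sum of good summands of orders `k+3` and `k+1` respectively;
(c) for `n ≥ 1` the `n`-th derivative of `ν_ξ^p · V(ξ·)` at `0` is a polynomial in
`ξ` without monomials of degree less than `n`. -/
theorem stmt15 (ν V : ℝ → ℝ) (hν : ContDiff ℝ (⊤ : ℕ∞) ν) (hν0 : ν 0 = 1)
    (hV : ContDiff ℝ (⊤ : ℕ∞) V) (p : ℝ) :
    (∀ ξ : ℝ, 1 < ξ →
      (ξ ^ 2 * (ν (ξ * 0) - 1) + 1) ^ p * V (ξ * 0) = V 0) ∧
    (∀ ξ : ℝ, 1 < ξ → ∀ (k : ℕ) (q : ℝ) (h : ℝ → ℝ), ContDiff ℝ (⊤ : ℕ∞) h →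
      ∀ t : ℝ, 0 < ξ ^ 2 * (ν (ξ * t) - 1) + 1 →
        HasDerivAt (fun u => ξ ^ k * (ξ ^ 2 * (ν (ξ * u) - 1) + 1) ^ q * h (ξ * u))
          (q * ξ ^ (k + 3) * (ξ ^ 2 * (ν (ξ * t) - 1) + 1) ^ (q - 1)
              * deriv ν (ξ * t) * h (ξ * t)
            + ξ ^ (k + 1) * (ξ ^ 2 * (ν (ξ * t) - 1) + 1) ^ q * deriv h (ξ * t)) t) ∧
    (∀ n : ℕ, 1 ≤ n → ∃ Q : Polynomial ℝ, (∀ j < n, Q.coeff j = 0) ∧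
      ∀ ξ : ℝ, 1 < ξ →
        iteratedDeriv n (fun t => (ξ ^ 2 * (ν (ξ * t) - 1) + 1) ^ p * V (ξ * t)) 0
          = Q.eval ξ) := by
  refine ⟨?_, ?_, ?_⟩
  · intro ξ _
    simp [hν0]
  · intro ξ _ k q h hh t ht
    have := MTerm.ev_hasDerivAt ν hν ξ ⟨1, k, q, h⟩ hh t ht
    refine (this.congr_deriv ?_).congr_of_eventuallyEq ?_
    · simp only [MTerm.evL, MTerm.D, MTerm.ev, List.map_cons, List.map_nil,
        List.sum_cons, List.sum_nil, add_zero]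
      ring
    · filter_upwards with u; simp [MTerm.ev]
  · intro n hn
    refine ⟨MTerm.toPoly (MTerm.Ln ν p V n), ?_, ?_⟩
    · exact MTerm.toPoly_coeff n _ (fun e he => (MTerm.Ln_mem ν hν p V hV n e he).2)
    · intro ξ _
      have h0 : 0 < ξ ^ 2 * (ν (ξ * 0) - 1) + 1 := by simp [hν0]
      rw [MTerm.iteratedDeriv_eq_evL ν hν p V hV ξ n 0 h0,
        MTerm.toPoly_eval ν hν0 ξ]
end
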